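/- Let A be an n×n symmetric positive semidefinite matrix with partial Cholesky factorization Πᵀ A Π = L Lᵀ + [[0,0],[0,S]] with L ∈ ℝ^{n×k}. Then for every 1 ≤ j ≤ k, λ_j(A) ≥ σ_j²(L), i.e., the squared singular values of L are dominated by the corresponding eigenvalues of A. -/

import Mathlib

/-!
Put `Q = Π L` and `M = Lᵀ L = Qᵀ Q`. The factorization gives
`Qᵀ A Q = M² + Lᵀ [[0,0],[0,S]] L ≥ M²`. Let `c = σ_j(L)² = λ_j(M)` and let `V` be the span of the
eigenvectors of `M` with eigenvalue at least `c`, a space of dimension at least `j + 1`. For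
`x ∈ V` we have `‖M x‖² ≥ c ⟪x, M x⟫ = c ‖Q x‖²`, so the Rayleigh quotient of `A` is at least `c`
on `Q V`. If `c > 0`, `Q` is injective on `V`, and the Courant–Fischer principle yields
`λ_j(A) ≥ c`; if `c = 0` there is nothing to prove since `A ≥ 0`.
-/

open Matrix

/-- The `j`-th largest eigenvalue (0-based index `j`) of a Hermitian matrix. -/
noncomputable def eigDesc {n : ℕ} {A : Matrix (Fin n) (Fin n) ℝ} (hA : A.IsHermitian)
    (j : Fin n) : ℝ :=
  (hA.eigenvalues ∘ Tuple.sort hA.eigenvalues) j.rev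

/-- The spectral norm (largest singular value) of a real matrix. -/
noncomputable def specNorm {m n : ℕ} (X : Matrix (Fin m) (Fin n) ℝ) : ℝ :=
  Real.sqrt (⨆ j, (show (Xᵀ * X).IsHermitian by
    simpa using Matrix.isHermitian_conjTranspose_mul_self X).eigenvalues j)

/-- The `j`-th largest singular value (0-based index `j`) of a real matrix. -/
noncomputable def sval {m k : ℕ} (X : Matrix (Fin m) (Fin k) ℝ) (j : Fin k) : ℝ :=
  Real.sqrt (eigDesc (show (Xᵀ * X).IsHermitian by
    simpa using Matrix.isHermitian_conjTranspose_mul_self X) j)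

open Finset Submodule Module
open scoped RealInnerProductSpace

namespace Tuple

variable {α : Type*} [LinearOrder α] {n : ℕ} (f : Fin n → α) (j : Fin n)

theorem succ_le_card_filter_sort_rev_le : j.val + 1 ≤ #{i | f (sort f j.rev) ≤ f i} := by
  calc j.val + 1 = #(Ici j.rev) := by simp [Fin.card_Ici, Fin.val_rev]; omega
    _ ≤ _ := card_le_card_of_injOn (sort f)
        (fun a ha => by simpa using monotone_sort f (by simpa using ha)) (sort f).injective.injOn

theorem sub_le_card_filter_le_sort_rev : n - j.val ≤ #{i | f i ≤ f (sort f j.rev)} := by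
  calc n - j.val = #(Iic j.rev) := by simp [Fin.card_Iic, Fin.val_rev]; omega
    _ ≤ _ := card_le_card_of_injOn (sort f)
        (fun a ha => by simpa using monotone_sort f (by simpa using ha)) (sort f).injective.injOn

end Tuple

namespace OrthonormalBasis

variable {ι 𝕜 E : Type*} [Fintype ι] [RCLike 𝕜] [NormedAddCommGroup E] [InnerProductSpace 𝕜 E]
  (b : OrthonormalBasis ι 𝕜 E)

theorem finrank_span_image_finset (s : Finset ι) : finrank 𝕜 (span 𝕜 (b '' s)) = #s := by
  have := finrank_span_eq_card (b.orthonormal.linearIndependent.comp _ Subtype.val_injective :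
    LinearIndependent 𝕜 fun i : s => b i)
  rwa [Set.range_comp, Subtype.range_coe_subtype, Fintype.card_coe] at this

theorem repr_eq_zero_of_mem_span_image {s : Set ι} {x : E} (hx : x ∈ span 𝕜 (b '' s)) {i : ι}
    (hi : i ∉ s) : b.repr x i = 0 := by
  have := b.toBasis.repr_support_subset_of_mem_span s (by simpa using hx)
  by_contra h
  exact hi (this (by simpa [b.coe_toBasis_repr_apply] using h))

end OrthonormalBasis

theorem OrthonormalBasis.sum_mul_repr_sq_le_of_mem_span_image {ι E : Type*} [Fintype ι]
    [NormedAddCommGroup E] [InnerProductSpace ℝ E] (b : OrthonormalBasis ι ℝ E) {s : Set ι}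
    {x : E} (hx : x ∈ span ℝ (b '' s)) {f g : ι → ℝ} (hfg : ∀ i ∈ s, f i ≤ g i) :
    ∑ i, f i * b.repr x i ^ 2 ≤ ∑ i, g i * b.repr x i ^ 2 := by
  refine sum_le_sum fun i _ => ?_
  by_cases hi : i ∈ s
  · exact mul_le_mul_of_nonneg_right (hfg i hi) (sq_nonneg _)
  · simp [b.repr_eq_zero_of_mem_span_image hx hi]

theorem Submodule.exists_mem_inf_ne_zero_of_finrank_lt_add {K V : Type*} [DivisionRing K]
    [AddCommGroup V] [Module K V] [FiniteDimensional K V] {s t : Submodule K V}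
    (h : finrank K V < finrank K s + finrank K t) : ∃ x ∈ s, x ∈ t ∧ x ≠ 0 := by
  obtain ⟨x, ⟨hxs, hxt⟩, hx0⟩ := (s ⊓ t).ne_bot_iff.mp fun hbot =>
    h.not_ge (finrank_add_finrank_le_of_disjoint (disjoint_iff.mpr hbot))
  exact ⟨x, hxs, hxt, hx0⟩

theorem LinearMap.finrank_map_eq_of_mul_norm_sq_le {E F : Type*} [NormedAddCommGroup E]
    [NormedSpace ℝ E] [NormedAddCommGroup F] [NormedSpace ℝ F] (f : E →ₗ[ℝ] F)
    {V : Submodule ℝ E} [FiniteDimensional ℝ V] {c : ℝ} (hc : 0 < c)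
    (h : ∀ x ∈ V, c * ‖x‖ ^ 2 ≤ ‖f x‖ ^ 2) : finrank ℝ (V.map f) = finrank ℝ V := by
  have hker : Disjoint V (ker f) := Submodule.disjoint_def.mpr fun x hx hfx => by
    have hx0 : c * ‖x‖ ^ 2 ≤ 0 := by simpa [mem_ker.mp hfx] using h x hx
    simpa using nonpos_of_mul_nonpos_right hx0 hc
  rw [← range_domRestrict, finrank_range_of_inj (injective_domRestrict_iff.mpr hker)]

theorem Matrix.inner_toEuclideanLin_conjTranspose_mul_mul {𝕜 m n : Type*} [RCLike 𝕜] [Fintype m]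
    [DecidableEq m] [Fintype n] [DecidableEq n] (Q : Matrix m n 𝕜) (A : Matrix m m 𝕜)
    (x y : EuclideanSpace 𝕜 n) :
    inner 𝕜 x (toEuclideanLin (Qᴴ * A * Q) y) =
      inner 𝕜 (toEuclideanLin Q x) (toEuclideanLin A (toEuclideanLin Q y)) := by
  simp only [toLpLin_mul_same, LinearMap.comp_apply]
  rw [toEuclideanLin_conjTranspose_eq_adjoint, LinearMap.adjoint_inner_right]

theorem Matrix.PosSemidef.fromBlocks_zero {R m n : Type*} [Fintype m] [Fintype n]
    [DecidableEq n] [CommRing R] [PartialOrder R] [StarRing R] {S : Matrix n n R}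
    (hS : S.PosSemidef) : (fromBlocks (0 : Matrix m m R) 0 0 S).PosSemidef := by
  convert hS.conjTranspose_mul_mul_same (fromCols (0 : Matrix n m R) (1 : Matrix n n R)) using 1
  ext (i | i) (j | j) <;>
    simp [mul_apply, fromCols, conjTranspose_apply, one_apply, apply_ite star]

theorem Matrix.transpose_permMatrix_mul_self {R n : Type*} [Fintype n] [DecidableEq n]
    [NonAssocSemiring R] (σ : Equiv.Perm n) :
    (σ.permMatrix R)ᵀ * σ.permMatrix R = 1 := by
  simp [← permMatrix_mul]

namespace Matrix.IsHermitian

variable {n : Type*} [Fintype n] [DecidableEq n] {B : Matrix n n ℝ} (hB : B.IsHermitian)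

noncomputable def eigenvectorSpan (s : Set ℝ) : Submodule ℝ (EuclideanSpace ℝ n) :=
  span ℝ (hB.eigenvectorBasis '' {i | hB.eigenvalues i ∈ s})

theorem finrank_eigenvectorSpan (s : Set ℝ) [DecidablePred (· ∈ s)] :
    finrank ℝ (hB.eigenvectorSpan s) = #{i | hB.eigenvalues i ∈ s} := by
  rw [eigenvectorSpan, ← hB.eigenvectorBasis.finrank_span_image_finset, coe_filter_univ]

theorem repr_toEuclideanLin (x : EuclideanSpace ℝ n) (i : n) :
    hB.eigenvectorBasis.repr (toEuclideanLin B x) i =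
      hB.eigenvalues i * hB.eigenvectorBasis.repr x i := by
  have hv : toEuclideanLin B (hB.eigenvectorBasis i) = hB.eigenvalues i • hB.eigenvectorBasis i :=
    WithLp.ofLp_injective 2 (hB.mulVec_eigenvectorBasis i)
  rw [OrthonormalBasis.repr_apply_apply, OrthonormalBasis.repr_apply_apply,
    ← isSymmetric_toEuclideanLin_iff.mpr hB, hv, real_inner_smul_left]

theorem inner_toEuclideanLin_eq_sum (x y : EuclideanSpace ℝ n) :
    ⟪x, toEuclideanLin B y⟫ =
      ∑ i, hB.eigenvalues i * (hB.eigenvectorBasis.repr x i * hB.eigenvectorBasis.repr y i) := by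
  rw [← hB.eigenvectorBasis.repr.inner_map_map, PiLp.inner_apply]
  simp only [repr_toEuclideanLin, RCLike.inner_apply, conj_trivial]
  exact sum_congr rfl fun i _ => by ring

theorem inner_self_toEuclideanLin_eq_sum (x : EuclideanSpace ℝ n) :
    ⟪x, toEuclideanLin B x⟫ = ∑ i, hB.eigenvalues i * hB.eigenvectorBasis.repr x i ^ 2 := by
  simp only [hB.inner_toEuclideanLin_eq_sum, sq]

theorem norm_toEuclideanLin_sq_eq_sum (x : EuclideanSpace ℝ n) :
    ‖toEuclideanLin B x‖ ^ 2 = ∑ i, hB.eigenvalues i ^ 2 * hB.eigenvectorBasis.repr x i ^ 2 := by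
  rw [← real_inner_self_eq_norm_sq, hB.inner_toEuclideanLin_eq_sum]
  exact sum_congr rfl fun i _ => by rw [hB.repr_toEuclideanLin]; ring

theorem norm_sq_eq_sum (x : EuclideanSpace ℝ n) :
    ‖x‖ ^ 2 = ∑ i, hB.eigenvectorBasis.repr x i ^ 2 := by
  simp only [← hB.eigenvectorBasis.sum_sq_inner_right, OrthonormalBasis.repr_apply_apply]

variable {hB}

theorem mul_norm_sq_le_inner_of_mem_eigenvectorSpan_Ici {c : ℝ} {x : EuclideanSpace ℝ n}
    (hx : x ∈ hB.eigenvectorSpan (Set.Ici c)) : c * ‖x‖ ^ 2 ≤ ⟪x, toEuclideanLin B x⟫ := by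
  rw [hB.norm_sq_eq_sum, hB.inner_self_toEuclideanLin_eq_sum, mul_sum]
  exact hB.eigenvectorBasis.sum_mul_repr_sq_le_of_mem_span_image hx fun i hi => hi

theorem inner_le_mul_norm_sq_of_mem_eigenvectorSpan_Iic {d : ℝ} {x : EuclideanSpace ℝ n}
    (hx : x ∈ hB.eigenvectorSpan (Set.Iic d)) : ⟪x, toEuclideanLin B x⟫ ≤ d * ‖x‖ ^ 2 := by
  rw [hB.norm_sq_eq_sum, hB.inner_self_toEuclideanLin_eq_sum, mul_sum]
  exact hB.eigenvectorBasis.sum_mul_repr_sq_le_of_mem_span_image hx fun i hi => hi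

theorem mul_inner_le_norm_sq_of_mem_eigenvectorSpan_Ici {c : ℝ} (hc : 0 ≤ c)
    {x : EuclideanSpace ℝ n} (hx : x ∈ hB.eigenvectorSpan (Set.Ici c)) :
    c * ⟪x, toEuclideanLin B x⟫ ≤ ‖toEuclideanLin B x‖ ^ 2 := by
  rw [hB.norm_toEuclideanLin_sq_eq_sum, hB.inner_self_toEuclideanLin_eq_sum, mul_sum]
  simp_rw [← mul_assoc]
  refine hB.eigenvectorBasis.sum_mul_repr_sq_le_of_mem_span_image hx fun i (hi : c ≤ _) => ?_
  rw [sq]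
  exact mul_le_mul_of_nonneg_right hi (hc.trans hi)

end Matrix.IsHermitian

section eigDesc

variable {m : ℕ} {B : Matrix (Fin m) (Fin m) ℝ} (hB : B.IsHermitian) (j : Fin m)

theorem succ_le_finrank_eigenvectorSpan_Ici_eigDesc :
    j.val + 1 ≤ finrank ℝ (hB.eigenvectorSpan (Set.Ici (eigDesc hB j))) := by
  rw [hB.finrank_eigenvectorSpan]
  simpa [eigDesc] using Tuple.succ_le_card_filter_sort_rev_le hB.eigenvalues j

theorem sub_le_finrank_eigenvectorSpan_Iic_eigDesc :
    m - j.val ≤ finrank ℝ (hB.eigenvectorSpan (Set.Iic (eigDesc hB j))) := by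
  rw [hB.finrank_eigenvectorSpan]
  simpa [eigDesc] using Tuple.sub_le_card_filter_le_sort_rev hB.eigenvalues j

/-- The easy half of the Courant–Fischer min-max principle. -/
theorem le_eigDesc_of_forall_mul_norm_sq_le_inner {c : ℝ}
    {V : Submodule ℝ (EuclideanSpace ℝ (Fin m))} (hV : j.val + 1 ≤ finrank ℝ V)
    (hc : ∀ x ∈ V, c * ‖x‖ ^ 2 ≤ ⟪x, toEuclideanLin B x⟫) : c ≤ eigDesc hB j := by
  have hW := sub_le_finrank_eigenvectorSpan_Iic_eigDesc hB j
  obtain ⟨x, hxV, hxW, hx0⟩ := exists_mem_inf_ne_zero_of_finrank_lt_add (s := V)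
    (t := hB.eigenvectorSpan (Set.Iic (eigDesc hB j))) (by rw [finrank_euclideanSpace_fin]; omega)
  exact le_of_mul_le_mul_right
    ((hc x hxV).trans (IsHermitian.inner_le_mul_norm_sq_of_mem_eigenvectorSpan_Iic hxW))
    (pow_pos (norm_pos_iff.mpr hx0) 2)

end eigDesc

theorem Matrix.PosSemidef.eigDesc_nonneg {m : ℕ} {B : Matrix (Fin m) (Fin m) ℝ}
    (hB : B.PosSemidef) (j : Fin m) : 0 ≤ eigDesc hB.isHermitian j :=
  hB.eigenvalues_nonneg _

section PartialCholesky

variable {n p : Type*} [Fintype n] [DecidableEq n] [Fintype p] [DecidableEq p]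
  {A R : Matrix n n ℝ} {σ : Equiv.Perm n} {L : Matrix n p ℝ}

theorem norm_toEuclideanLin_permMatrix_mul_sq (x : EuclideanSpace ℝ p) :
    ‖toEuclideanLin (σ.permMatrix ℝ * L) x‖ ^ 2 = ⟪x, toEuclideanLin (Lᵀ * L) x⟫ := by
  have h := inner_toEuclideanLin_conjTranspose_mul_mul (σ.permMatrix ℝ * L) 1 x x
  rw [conjTranspose_eq_transpose_of_trivial, transpose_mul, Matrix.mul_one, Matrix.mul_assoc,
    ← Matrix.mul_assoc _ _ L, transpose_permMatrix_mul_self, Matrix.one_mul, toLpLin_one,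
    LinearMap.id_apply] at h
  rw [h, real_inner_self_eq_norm_sq]

theorem norm_toEuclideanLin_transpose_mul_self_sq_le_inner (hR : R.PosSemidef)
    (hfact : (σ.permMatrix ℝ)ᵀ * A * σ.permMatrix ℝ = L * Lᵀ + R) (x : EuclideanSpace ℝ p) :
    ‖toEuclideanLin (Lᵀ * L) x‖ ^ 2 ≤
      ⟪toEuclideanLin (σ.permMatrix ℝ * L) x,
        toEuclideanLin A (toEuclideanLin (σ.permMatrix ℝ * L) x)⟫ := by
  have hsplit : (σ.permMatrix ℝ * L)ᴴ * A * (σ.permMatrix ℝ * L) =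
      (Lᵀ * L)ᴴ * 1 * (Lᵀ * L) + Lᴴ * R * L := by
    simp only [conjTranspose_eq_transpose_of_trivial]
    calc _ = Lᵀ * ((σ.permMatrix ℝ)ᵀ * A * σ.permMatrix ℝ) * L := by
            simp only [transpose_mul, Matrix.mul_assoc]
      _ = _ := by
            simp only [hfact, transpose_mul, transpose_transpose, Matrix.mul_one, Matrix.add_mul,
              Matrix.mul_add, Matrix.mul_assoc]
  rw [← inner_toEuclideanLin_conjTranspose_mul_mul, hsplit, map_add, LinearMap.add_apply,
    inner_add_right, inner_toEuclideanLin_conjTranspose_mul_mul, toLpLin_one, LinearMap.id_apply,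
    real_inner_self_eq_norm_sq]
  exact le_add_of_nonneg_right
    ((isPositive_toEuclideanLin_iff.mpr (hR.conjTranspose_mul_mul_same L)).inner_nonneg_right x)

end PartialCholesky

/-- For a partial Cholesky factorization `Πᵀ A Π = L Lᵀ + [[0,0],[0,S]]` of a
symmetric positive semidefinite `A`, the squared singular values of `L` are dominated by the
corresponding eigenvalues of `A`: `λ_j(A) ≥ σ_j²(L)` for `1 ≤ j ≤ k`. -/
theorem partial_cholesky_sval_le_eig {k m : ℕ}
    (A : Matrix (Fin (k + m)) (Fin (k + m)) ℝ) (hA : A.PosSemidef)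
    (σ : Equiv.Perm (Fin (k + m)))
    (L : Matrix (Fin (k + m)) (Fin k) ℝ)
    (S : Matrix (Fin m) (Fin m) ℝ) (hS : S.PosSemidef)
    (hfact : (σ.permMatrix ℝ)ᵀ * A * σ.permMatrix ℝ =
      L * Lᵀ + (Matrix.reindex finSumFinEquiv finSumFinEquiv) (Matrix.fromBlocks 0 0 0 S)) :
    ∀ j : Fin k, sval L j ^ 2 ≤ eigDesc hA.isHermitian (Fin.castAdd m j) := by
  intro j
  have hM : (Lᵀ * L).PosSemidef := by simpa using posSemidef_conjTranspose_mul_self L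
  have hR : (reindex finSumFinEquiv finSumFinEquiv (fromBlocks 0 0 0 S)).PosSemidef :=
    (hS.fromBlocks_zero (m := Fin k)).submatrix _
  have hsval : sval L j ^ 2 = eigDesc hM.isHermitian j := Real.sq_sqrt (hM.eigDesc_nonneg j)
  rw [hsval]
  set c := eigDesc hM.isHermitian j
  obtain hc | hc := (show 0 ≤ c from hM.eigDesc_nonneg j).eq_or_lt
  · exact hc ▸ hA.eigDesc_nonneg _
  set V := hM.isHermitian.eigenvectorSpan (Set.Ici c)
  set f := toEuclideanLin (σ.permMatrix ℝ * L)
  have hfV : ∀ x ∈ V, c * ‖x‖ ^ 2 ≤ ‖f x‖ ^ 2 := fun x hx =>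
    (IsHermitian.mul_norm_sq_le_inner_of_mem_eigenvectorSpan_Ici hx).trans_eq
      (norm_toEuclideanLin_permMatrix_mul_sq x).symm
  refine le_eigDesc_of_forall_mul_norm_sq_le_inner hA.isHermitian _ (V := V.map f) ?_ ?_
  · rw [f.finrank_map_eq_of_mul_norm_sq_le hc hfV]
    exact succ_le_finrank_eigenvectorSpan_Ici_eigDesc hM.isHermitian j
  · rintro _ ⟨x, hx, rfl⟩
    calc c * ‖f x‖ ^ 2 = c * ⟪x, toEuclideanLin (Lᵀ * L) x⟫ := by
          rw [norm_toEuclideanLin_permMatrix_mul_sq]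
      _ ≤ ‖toEuclideanLin (Lᵀ * L) x‖ ^ 2 :=
          IsHermitian.mul_inner_le_norm_sq_of_mem_eigenvectorSpan_Ici hc.le hx
      _ ≤ ⟪f x, toEuclideanLin A (f x)⟫ :=
          norm_toEuclideanLin_transpose_mul_self_sq_le_inner hR hfact x
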